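/- Suppose the sequence of pull-back tail measures {ν_{>n}} of a Cantor–Moran measure converges weakly to ρ = (1/2)(δ₀+δ₁) and lim_{n→∞} #B_n = ∞. Then the discrete measures {δ_{B_n/N_n}} also converge weakly to ρ. -/

import Mathlib

/-!
The refinement identity says that the Fourier transform of `ν_{>n}` is that of
`δ_{B_{n+1}/N_{n+1}} ∗ ν_{>(n+1)}(N_{n+1} ·)`; by uniqueness of Fourier transforms the two
measures coincide. That measure is the average over `b ∈ B_{n+1}` of copies of `ν_{>(n+1)}`
squeezed into `[b/N_{n+1}, (b+1)/N_{n+1}]`, so integrating a bounded continuous `f` against it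
differs from averaging `f(b/N_{n+1})` by at most the oscillation of `f` on intervals of length
`1/N_{n+1}`. Since `N_n ≥ #B_n → ∞`, uniform continuity of `f` on `[0,1]` makes this error vanish,
and the averages inherit the limit `(f 0 + f 1)/2` of `∫ f dν_{>n}`.
-/

open MeasureTheory Filter Topology

/-- Fourier transform of a Borel measure on `ℝ`: `μ̂(ξ) = ∫ e^{-2πiξx} dμ(x)`. -/
noncomputable def FT (μ : Measure ℝ) (ξ : ℝ) : ℂ :=
  ∫ x, Complex.exp (-(2 * (Real.pi : ℂ) * Complex.I) * (ξ : ℂ) * (x : ℂ)) ∂μ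

/-- The integral periodic zero set `Z(μ) = {ξ : μ̂(ξ + k) = 0 for all k ∈ ℤ}`. -/
def Zset (μ : Measure ℝ) : Set ℝ := {ξ : ℝ | ∀ k : ℤ, FT μ (ξ + (k : ℝ)) = 0}

/-- `ρ = (1/2)(δ₀ + δ₁)`. -/
noncomputable def rho : Measure ℝ :=
  (2 : ENNReal)⁻¹ • Measure.dirac (0 : ℝ) + (2 : ENNReal)⁻¹ • Measure.dirac (1 : ℝ)

/-- Weak convergence of a sequence of measures, tested against bounded continuous
functions. -/
def WeakLim (s : ℕ → Measure ℝ) (ν₀ : Measure ℝ) : Prop :=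
  ∀ f : BoundedContinuousFunction ℝ ℝ,
    Tendsto (fun n => ∫ x, f x ∂(s n)) atTop (𝓝 (∫ x, f x ∂ν₀))

open Set

lemma FT_eq_charFun (μ : Measure ℝ) (ξ : ℝ) : FT μ ξ = charFun μ (-(2 * Real.pi * ξ)) := by
  rw [FT, charFun_apply_real]
  congr 1 with x
  push_cast
  ring_nf

lemma MeasureTheory.Measure.ext_of_FT {μ ν : Measure ℝ} [IsFiniteMeasure μ] [IsFiniteMeasure ν]
    (h : ∀ ξ, FT μ ξ = FT ν ξ) : μ = ν := by
  refine Measure.ext_of_charFun (funext fun t => ?_)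
  have h2π : 2 * Real.pi ≠ 0 := by positivity
  simpa [FT_eq_charFun, mul_div_cancel₀ t h2π] using h (-(t / (2 * Real.pi)))

lemma integral_rho (f : BoundedContinuousFunction ℝ ℝ) : ∫ x, f x ∂rho = (f 0 + f 1) / 2 := by
  rw [rho, integral_add_measure ((f.integrable _).smul_measure (by simp))
    ((f.integrable _).smul_measure (by simp)), integral_smul_measure,
    integral_smul_measure, integral_dirac, integral_dirac]
  norm_num
  ring

/-- `δ_{B/N} ∗ ν(N ·)` in the notation of the paper. -/
noncomputable def refinement (ν : Measure ℝ) (B : Finset ℕ) (N : ℕ) : Measure ℝ :=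
  (B.card : ENNReal)⁻¹ • ∑ b ∈ B, ν.map (fun y => ((b : ℝ) + y) / N)

section Refinement

variable {ν : Measure ℝ} {B : Finset ℕ} {N : ℕ}

lemma measurable_natCast_add_div (b N : ℕ) : Measurable (fun y : ℝ => ((b : ℝ) + y) / N) := by
  fun_prop

lemma isProbabilityMeasure_refinement [IsProbabilityMeasure ν] (hB : B.Nonempty) :
    IsProbabilityMeasure (refinement ν B N) := by
  constructor
  simp [refinement, Measure.map_apply (measurable_natCast_add_div _ N) MeasurableSet.univ,
    ENNReal.inv_mul_cancel, hB.ne_empty]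

lemma integral_refinement {E : Type*} [NormedAddCommGroup E] [NormedSpace ℝ E]
    [IsFiniteMeasure ν] {g : ℝ → E} (hg : Continuous g) {C : ℝ} (hC : ∀ x, ‖g x‖ ≤ C) :
    ∫ x, g x ∂(refinement ν B N) = (B.card : ℝ)⁻¹ • ∑ b ∈ B, ∫ y, g (((b : ℝ) + y) / N) ∂ν := by
  rw [refinement, integral_smul_measure, integral_finsetSum_measure]
  · simp only [ENNReal.toReal_inv, ENNReal.toReal_natCast]
    congr 1
    refine Finset.sum_congr rfl fun b _ => ?_
    rw [integral_map (measurable_natCast_add_div b N).aemeasurable hg.aestronglyMeasurable]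
  · exact fun b _ => Integrable.of_bound hg.aestronglyMeasurable C (.of_forall hC)

lemma FT_refinement [IsFiniteMeasure ν] (ξ : ℝ) :
    FT (refinement ν B N) ξ =
      ((1 / (B.card : ℂ)) * ∑ b ∈ B,
        Complex.exp (-(2 * (Real.pi : ℂ) * Complex.I) * ((b : ℂ) / (N : ℂ)) * (ξ : ℂ))) *
      FT ν (ξ / (N : ℝ)) := by
  have hexp : ∀ x : ℝ, ‖Complex.exp (-(2 * (Real.pi : ℂ) * Complex.I) * ξ * x)‖ ≤ 1 := fun x => by
    rw [Complex.norm_exp]; simp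
  have hshift (b : ℕ) :
      ∫ y, Complex.exp (-(2 * (Real.pi : ℂ) * Complex.I) * ξ * ↑(((b : ℝ) + y) / N)) ∂ν =
        Complex.exp (-(2 * (Real.pi : ℂ) * Complex.I) * ((b : ℂ) / (N : ℂ)) * (ξ : ℂ)) *
        FT ν (ξ / (N : ℝ)) := by
    rw [FT, ← integral_const_mul]
    congr 1 with y
    rw [← Complex.exp_add]
    push_cast
    ring_nf
  rw [FT, integral_refinement (by fun_prop) hexp, Finset.sum_congr rfl fun b _ => hshift b,
    ← Finset.sum_mul, Complex.real_smul]
  push_cast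
  ring

end Refinement

lemma natCast_add_div_mem_Icc {b N : ℕ} (hb : b < N) {y : ℝ} (hy : y ∈ Icc 0 1) :
    ((b : ℝ) + y) / N ∈ Icc 0 1 := by
  have hbN : (b : ℝ) + 1 ≤ N := by exact_mod_cast hb
  have hN : (0 : ℝ) < N := by linarith [(Nat.cast_nonneg b : (0 : ℝ) ≤ b)]
  constructor
  · exact div_nonneg (by linarith [hy.1, (Nat.cast_nonneg b : (0 : ℝ) ≤ b)]) hN.le
  · rw [div_le_one hN]; linarith [hy.2]

lemma abs_sub_integral_le {α : Type*} [MeasurableSpace α] {μ : Measure α} [IsProbabilityMeasure μ]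
    {g : α → ℝ} (hg : Integrable g μ) {c ε : ℝ} (h : ∀ᵐ y ∂μ, |c - g y| ≤ ε) :
    |c - ∫ y, g y ∂μ| ≤ ε := by
  have hc : c - ∫ y, g y ∂μ = ∫ y, (c - g y) ∂μ := by
    rw [integral_sub (integrable_const c) hg, integral_const]
    simp
  rw [hc, ← Real.norm_eq_abs]
  exact (norm_integral_le_of_norm_le_const (by simpa using h)).trans_eq (by simp)

lemma abs_inv_card_mul_sum_le {ι : Type*} {s : Finset ι} (hs : s.Nonempty) {a : ι → ℝ} {ε : ℝ}
    (h : ∀ i ∈ s, |a i| ≤ ε) : |(s.card : ℝ)⁻¹ * ∑ i ∈ s, a i| ≤ ε := by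
  have hcard : (0 : ℝ) < s.card := by exact_mod_cast hs.card_pos
  rw [abs_mul, abs_inv, Nat.abs_cast, inv_mul_le_iff₀ hcard]
  calc |∑ i ∈ s, a i| ≤ ∑ i ∈ s, |a i| := Finset.abs_sum_le_sum_abs a s
    _ ≤ s.card * ε := by simpa using Finset.sum_le_card_nsmul s _ ε h

lemma abs_average_sub_integral_refinement_le {ν : Measure ℝ} [IsProbabilityMeasure ν]
    (hν : ν (Icc 0 1)ᶜ = 0) {B : Finset ℕ} (hB : B.Nonempty) {N : ℕ} (hBN : ∀ b ∈ B, b < N)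
    (f : BoundedContinuousFunction ℝ ℝ) {ε : ℝ}
    (hf : ∀ x ∈ Icc (0 : ℝ) 1, ∀ y ∈ Icc (0 : ℝ) 1, |x - y| ≤ 1 / N → |f x - f y| ≤ ε) :
    |1 / (B.card : ℝ) * ∑ b ∈ B, f (b / N) - ∫ x, f x ∂(refinement ν B N)| ≤ ε := by
  rw [integral_refinement f.continuous f.norm_coe_le_norm, smul_eq_mul, one_div, ← mul_sub,
    ← Finset.sum_sub_distrib]
  refine abs_inv_card_mul_sum_le hB fun b hb => abs_sub_integral_le ?_ ?_
  · exact Integrable.of_bound (by fun_prop) ‖f‖ (.of_forall fun y => f.norm_coe_le_norm _)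
  filter_upwards [mem_ae_iff.2 hν] with y hy
  have hb0 : (b : ℝ) / N ∈ Icc 0 1 := by
    simpa using natCast_add_div_mem_Icc (hBN b hb) (y := 0) (by simp)
  refine hf _ hb0 _ (natCast_add_div_mem_Icc (hBN b hb) hy) ?_
  rw [← sub_div, sub_add_cancel_left, abs_div, abs_neg, Nat.abs_cast, abs_of_nonneg hy.1]
  exact div_le_div_of_nonneg_right hy.2 (Nat.cast_nonneg N)

lemma tendsto_average_sub_integral_refinement {ν : ℕ → Measure ℝ}
    [∀ n, IsProbabilityMeasure (ν n)] (hν : ∀ n, ν n (Icc 0 1)ᶜ = 0) {B : ℕ → Finset ℕ}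
    (hB : ∀ n, (B n).Nonempty) {N : ℕ → ℕ} (hBN : ∀ n, ∀ b ∈ B n, b < N n)
    (hN : Tendsto (fun n => (N n : ℝ)) atTop atTop) (f : BoundedContinuousFunction ℝ ℝ) :
    Tendsto (fun n => 1 / ((B n).card : ℝ) * ∑ b ∈ B n, f (b / N n) -
      ∫ x, f x ∂(refinement (ν n) (B n) (N n))) atTop (𝓝 0) := by
  refine Metric.tendsto_nhds.2 fun ε hε => ?_
  obtain ⟨δ, hδ, hfδ⟩ := Metric.uniformContinuousOn_iff_le.1
    (isCompact_Icc.uniformContinuousOn_of_continuous f.continuous.continuousOn) (ε / 2)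
    (half_pos hε)
  filter_upwards [hN.eventually_gt_atTop (1 / δ)] with n hn
  have hNδ : 1 / (N n : ℝ) ≤ δ := by
    rw [div_le_iff₀ (by linarith [one_div_pos.2 hδ])]
    rw [div_lt_iff₀ hδ] at hn
    linarith
  rw [dist_zero_right, Real.norm_eq_abs]
  refine (abs_average_sub_integral_refinement_le (hν n) (hB n) (hBN n) f
    fun x hx y hy hxy => ?_).trans_lt (half_lt_self hε)
  simpa [Real.dist_eq] using hfδ x hx y hy (by rw [Real.dist_eq]; linarith)

theorem stmt18_general (N : ℕ → ℕ)
    (B : ℕ → Finset ℕ) (hne : ∀ n, (B n).Nonempty) (hsub : ∀ n, ∀ b ∈ B n, b < N n)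
    (ν : ℕ → Measure ℝ)
    (hprob : ∀ n, IsProbabilityMeasure (ν n))
    (hsupp : ∀ n, ν n (Set.Icc (0 : ℝ) 1)ᶜ = 0)
    (hRef : ∀ n (ξ : ℝ), FT (ν n) ξ =
      ((1 / ((B (n+1)).card : ℂ)) * ∑ b ∈ B (n+1),
        Complex.exp (-(2 * (Real.pi : ℂ) * Complex.I) * ((b : ℂ) / (N (n+1) : ℂ)) * (ξ : ℂ))) *
      FT (ν (n+1)) (ξ / (N (n+1) : ℝ)))
    (hconv : WeakLim ν rho)
    (hcard : Tendsto (fun n => (B n).card) atTop atTop) :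
    ∀ f : BoundedContinuousFunction ℝ ℝ,
      Tendsto (fun n => (1 / ((B n).card : ℝ)) * ∑ b ∈ B n, f ((b : ℝ) / (N n : ℝ)))
        atTop (𝓝 ((f 0 + f 1) / 2)) := by
  intro f
  have hN : Tendsto (fun n => (N n : ℝ)) atTop atTop := by
    refine tendsto_natCast_atTop_atTop.comp (tendsto_atTop_mono (fun n => ?_) hcard)
    simpa using Finset.card_le_card fun b hb => Finset.mem_range.2 (hsub n b hb)
  have hν : ∀ n, ν n = refinement (ν (n + 1)) (B (n + 1)) (N (n + 1)) := fun n => by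
    have := isProbabilityMeasure_refinement (ν := ν (n + 1)) (N := N (n + 1)) (hne (n + 1))
    exact Measure.ext_of_FT fun ξ => by rw [hRef, FT_refinement]
  have hdiff := tendsto_average_sub_integral_refinement (fun n => hsupp (n + 1))
    (fun n => hne (n + 1)) (fun n => hsub (n + 1)) (hN.comp (tendsto_add_atTop_nat 1)) f
  rw [← tendsto_add_atTop_iff_nat 1]
  simpa [← hν, integral_rho] using hdiff.add (hconv f)

/-- If the pulled-back tails `ν_{>n}` (satisfying the refinement identity
`ν̂_{>n}(ξ) = δ̂_{B_{n+1}/N_{n+1}}(ξ)·ν̂_{>(n+1)}(ξ/N_{n+1})`) converge weakly to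
`ρ = (1/2)(δ₀+δ₁)` and `#B_n → ∞`, then the discrete measures `δ_{B_n/N_n}` also
converge weakly to `ρ` (tested against bounded continuous functions, where
`∫ f dρ = (f(0)+f(1))/2`). -/
theorem stmt18 (N : ℕ → ℕ) (hN : ∀ n, 2 ≤ N n)
    (B : ℕ → Finset ℕ) (hne : ∀ n, (B n).Nonempty) (hsub : ∀ n, ∀ b ∈ B n, b < N n)
    (ν : ℕ → Measure ℝ)
    (hprob : ∀ n, IsProbabilityMeasure (ν n))
    (hsupp : ∀ n, ν n (Set.Icc (0 : ℝ) 1)ᶜ = 0)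
    (hRef : ∀ n (ξ : ℝ), FT (ν n) ξ =
      ((1 / ((B (n+1)).card : ℂ)) * ∑ b ∈ B (n+1),
        Complex.exp (-(2 * (Real.pi : ℂ) * Complex.I) * ((b : ℂ) / (N (n+1) : ℂ)) * (ξ : ℂ))) *
      FT (ν (n+1)) (ξ / (N (n+1) : ℝ)))
    (hconv : WeakLim ν rho)
    (hcard : Tendsto (fun n => (B n).card) atTop atTop) :
    ∀ f : BoundedContinuousFunction ℝ ℝ,
      Tendsto (fun n => (1 / ((B n).card : ℝ)) * ∑ b ∈ B n, f ((b : ℝ) / (N n : ℝ)))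
        atTop (𝓝 ((f 0 + f 1) / 2)) :=
  stmt18_general N B hne hsub ν hprob hsupp hRef hconv hcard
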